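/- Let {S(t) : t ≥ 0} be an asymptotically closed semigroup on a complete metric space (V,d), let T > 0 and N ∈ ℕ. Then the semigroup has a T-discrete exponential attractor in V if and only if it has a (T/N)-discrete exponential attractor in V. -/

import Mathlib

open Filter Metric Set Topology Bornology
open scoped ENNReal

section Defs

variable {V : Type*} [MetricSpace V]

/-- A semigroup (semiflow) of maps `S t : V → V`, `t ∈ [0,∞)`. -/
def IsSemiflow (S : ℝ → V → V) : Prop :=
  (∀ x : V, S 0 x = x) ∧ ∀ t s : ℝ, 0 ≤ t → 0 ≤ s → ∀ x : V, S t (S s x) = S (t + s) x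

/-- One-sided Hausdorff distance `dist^V(G,A) = sup_{x∈G} inf_{y∈A} d(x,y)` (in `ℝ≥0∞`). -/
noncomputable def attrDist (G A : Set V) : ℝ≥0∞ :=
  ⨆ x ∈ G, EMetric.infEdist x A

/-- The set `A` attracts all bounded subsets of `V`. -/
def AttractsSet (S : ℝ → V → V) (A : Set V) : Prop :=
  ∀ G : Set V, IsBounded G → Tendsto (fun t : ℝ => attrDist (S t '' G) A) atTop (𝓝 0)

/-- A global attractor: nonempty, compact, invariant, attracts all bounded sets. -/
def IsGlobalAttr (S : ℝ → V → V) (A : Set V) : Prop :=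
  A.Nonempty ∧ IsCompact A ∧ (∀ t : ℝ, 0 ≤ t → S t '' A = A) ∧ AttractsSet S A

/-- `B` is an absorbing set for the semigroup. -/
def IsAbsorbingSet (S : ℝ → V → V) (B : Set V) : Prop :=
  ∀ G : Set V, IsBounded G → ∃ tG : ℝ, 0 ≤ tG ∧ ∀ t : ℝ, tG ≤ t → S t '' G ⊆ B

/-- The semigroup is asymptotically closed. -/
def AsympClosed (S : ℝ → V → V) : Prop :=
  ∀ t : ℝ, 0 ≤ t → ∀ tk : ℕ → ℝ, (∀ k, 0 ≤ tk k) → Tendsto tk atTop atTop →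
    ∀ xk : ℕ → V, IsBounded (range xk) → ∀ x y : V,
      Tendsto (fun k => S (tk k) (xk k)) atTop (𝓝 x) →
      Tendsto (fun k => S (t + tk k) (xk k)) atTop (𝓝 y) → S t x = y

/-- The ω-limit set `Λ^V(G) = ⋂_{s ≥ 0} cl_V ⋃_{t ≥ s} S(t)G`. -/
def omegaLim (S : ℝ → V → V) (G : Set V) : Set V :=
  ⋂ (s : ℝ) (_ : 0 ≤ s), closure (⋃ (t : ℝ) (_ : s ≤ t), S t '' G)

/-- `N^V(G,ε)`: minimal number of open `ε`-balls centered in `G` needed to cover `G`. -/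
noncomputable def coverN (G : Set V) (ε : ℝ) : ℝ≥0∞ :=
  ⨅ (F : Finset V) (_ : ↑F ⊆ G) (_ : G ⊆ ⋃ x ∈ F, ball x ε), (F.card : ℝ≥0∞)

open Classical in
/-- Fractal (box-counting) dimension `limsup_{ε→0⁺} log N^V(M,ε) / log (1/ε)`. -/
noncomputable def fracDim (M : Set V) : ℝ≥0∞ :=
  limsup (fun ε : ℝ =>
    if coverN M ε = ⊤ then (⊤ : ℝ≥0∞)
    else ENNReal.ofReal (Real.log (coverN M ε).toReal / Real.log (1 / ε))) (𝓝[>] (0 : ℝ))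

/-- `M` attracts all bounded sets at exponential rate `ξ`. -/
def ExpAttractsAt (S : ℝ → V → V) (M : Set V) (ξ : ℝ) : Prop :=
  ∀ G : Set V, IsBounded G →
    Tendsto (fun t : ℝ => ENNReal.ofReal (Real.exp (ξ * t)) * attrDist (S t '' G) M)
      atTop (𝓝 0)

/-- A `T`-discrete exponential attractor. -/
def IsDiscExpAttr (S : ℝ → V → V) (T : ℝ) (M : Set V) : Prop :=
  M.Nonempty ∧ IsCompact M ∧ S T '' M ⊆ M ∧ fracDim M ≠ ⊤ ∧
    ∃ ξ : ℝ, 0 < ξ ∧ ExpAttractsAt S M ξ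

/-- The covering condition `N^V(S(kT)B, a·qᵏ) ≤ b·hᵏ` for `k ≥ k₀`. -/
def CoveringCond (S : ℝ → V → V) (T : ℝ) (B : Set V) (k₀ : ℕ) (a b q h : ℝ) : Prop :=
  ∀ k : ℕ, k₀ ≤ k →
    coverN (S (k * T) '' B) (a * q ^ k) ≤ ENNReal.ofReal (b * h ^ k)

end Defs

/-!
Both directions follow from one construction, valid for every step `τ > 0`: a nonempty compact set
`M₀` of finite fractal dimension attracting bounded sets at rate `ξ` yields a `τ`-discrete
exponential attractor. The bounded set `B = cthickening 1 M₀` absorbs bounded sets, and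
`S (t₀ + j τ) B` lies within `r_j = exp (-ξ (t₀ + j τ))` of `M₀`, so it has a `6 r_j`-net `W_j`
of fewer than `r_j ^ (-d)` points. Carrying the nets forward by `S τ` gives finite sets
`E_j ⊆ S (t₀ + j τ) B` with `S τ E_j ⊆ E_(j+1)` and `|E_j| ≤ (j + 1) r_j ^ (-d)`, and the
attractor is the closure `M` of their union: it is compact since `E_j` approaches `M₀`, positively
invariant by asymptotic closedness, of finite dimension by counting the points of `E_0, …, E_J`
and covering the rest by a cover of `M₀`, and it attracts exponentially since, once `G` has
entered `B` at time `t_G`, `S t G` lies in some `S (t₀ + j τ) B` with `t₀ + j τ ≥ t - t_G - τ`.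
-/

section Covering

variable {V : Type*} [MetricSpace V]

lemma le_attrDist {G A : Set V} {x : V} (hx : x ∈ G) : infEDist x A ≤ attrDist G A :=
  le_iSup₂ (f := fun x (_ : x ∈ G) => infEDist x A) x hx

lemma attrDist_le_iff {G A : Set V} {c : ℝ≥0∞} :
    attrDist G A ≤ c ↔ ∀ x ∈ G, infEDist x A ≤ c :=
  iSup₂_le_iff

lemma attrDist_mono_left {G G' A : Set V} (h : G ⊆ G') : attrDist G A ≤ attrDist G' A :=
  attrDist_le_iff.2 fun _ hx => le_attrDist (h hx)

lemma attrDist_le_of_subset_biUnion_ball {G A : Set V} {F : Finset V} {r : ℝ} (hFA : ↑F ⊆ A)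
    (hG : G ⊆ ⋃ c ∈ F, ball c r) : attrDist G A ≤ ENNReal.ofReal r :=
  attrDist_le_iff.2 fun x hx => by
    obtain ⟨c, hc, hxc⟩ := mem_iUnion₂.1 (hG hx)
    exact (infEDist_le_edist_of_mem (hFA hc)).trans (edist_lt_ofReal.2 hxc).le

lemma exists_dist_lt_two_mul_of_infEDist_le {A : Set V} {x : V} {r : ℝ} (hr : 0 < r)
    (h : infEDist x A ≤ ENNReal.ofReal r) : ∃ a ∈ A, dist x a < 2 * r := by
  obtain ⟨a, ha, hxa⟩ := infEDist_lt_iff.1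
    (h.trans_lt ((ENNReal.ofReal_lt_ofReal_iff (by positivity)).2 (show r < 2 * r by linarith)))
  exact ⟨a, ha, edist_lt_ofReal.1 hxa⟩

lemma coverN_le_card {G : Set V} {ε : ℝ} {F : Finset V} (hFG : ↑F ⊆ G)
    (hG : G ⊆ ⋃ c ∈ F, ball c ε) : coverN G ε ≤ F.card :=
  iInf₂_le_of_le F hFG (iInf_le_of_le hG le_rfl)

lemma coverN_anti {G : Set V} {ε ε' : ℝ} (h : ε ≤ ε') : coverN G ε' ≤ coverN G ε :=
  le_iInf₂ fun _ hFG => le_iInf fun hG =>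
    coverN_le_card hFG (hG.trans (iUnion₂_mono fun _ _ => ball_subset_ball h))

lemma exists_finset_of_coverN_lt {G : Set V} {ε : ℝ} {X : ℝ} (h : coverN G ε < ENNReal.ofReal X) :
    ∃ F : Finset V, ↑F ⊆ G ∧ G ⊆ (⋃ c ∈ F, ball c ε) ∧ (F.card : ℝ) < X := by
  simp only [coverN, iInf_lt_iff] at h
  obtain ⟨F, hFG, hG, hcard⟩ := h
  exact ⟨F, hFG, hG, (ENNReal.natCast_lt_ofReal).1 hcard⟩

lemma exists_finset_centered_cover {G : Set V} {F : Finset V} {r : ℝ}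
    (hG : G ⊆ ⋃ c ∈ F, ball c r) :
    ∃ F' : Finset V, ↑F' ⊆ G ∧ F'.card ≤ F.card ∧ G ⊆ ⋃ c ∈ F', ball c (2 * r) := by
  classical
  let F₁ := F.filter fun c => (G ∩ ball c r).Nonempty
  choose! g hg using fun c (hc : c ∈ F₁) => (Finset.mem_filter.1 hc).2
  refine ⟨F₁.image g, ?_, Finset.card_image_le.trans (Finset.card_filter_le _ _), ?_⟩
  · simpa [Set.subset_def] using fun c hc => (hg c hc).1
  · intro x hx
    obtain ⟨c, hc, hxc⟩ := mem_iUnion₂.1 (hG hx)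
    have hc₁ : c ∈ F₁ := Finset.mem_filter.2 ⟨hc, x, hx, hxc⟩
    refine mem_iUnion₂.2 ⟨g c, Finset.mem_image_of_mem g hc₁, ?_⟩
    calc dist x (g c) ≤ dist x c + dist (g c) c := dist_triangle_right _ _ _
      _ < r + r := add_lt_add hxc (hg c hc₁).2
      _ = 2 * r := by ring

lemma coverN_closure_le_card {G : Set V} {F : Finset V} {r : ℝ} (hr : 0 < r)
    (hG : G ⊆ ⋃ c ∈ F, ball c r) : coverN (closure G) (4 * r) ≤ F.card := by
  have hclosure : closure G ⊆ ⋃ c ∈ F, ball c (2 * r) :=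
    (closure_minimal (hG.trans (iUnion₂_mono fun c _ => ball_subset_closedBall))
      (isClosed_biUnion_finset fun c _ => isClosed_closedBall)).trans
      (iUnion₂_mono fun c _ => closedBall_subset_ball (by linarith))
  obtain ⟨F', hF'G, hcard, hcov⟩ := exists_finset_centered_cover hclosure
  calc coverN (closure G) (4 * r) ≤ F'.card :=
        coverN_le_card hF'G (by rwa [show 4 * r = 2 * (2 * r) by ring])
    _ ≤ F.card := by exact_mod_cast hcard

lemma exists_net_of_attrDist_le {G A : Set V} {r X : ℝ} (hr : 0 < r)
    (hGA : attrDist G A ≤ ENNReal.ofReal r) (hA : coverN A r < ENNReal.ofReal X) :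
    ∃ W : Finset V, ↑W ⊆ G ∧ (W.card : ℝ) < X ∧ G ⊆ ⋃ w ∈ W, ball w (6 * r) := by
  obtain ⟨F, hFA, hAF, hFX⟩ := exists_finset_of_coverN_lt hA
  have hGF : G ⊆ ⋃ c ∈ F, ball c (3 * r) := fun x hx => by
    obtain ⟨a, ha, hxa⟩ := exists_dist_lt_two_mul_of_infEDist_le hr ((le_attrDist hx).trans hGA)
    obtain ⟨c, hc, hac⟩ := mem_iUnion₂.1 (hAF ha)
    exact mem_iUnion₂.2 ⟨c, hc, mem_ball.2 <| by linarith [dist_triangle x a c, mem_ball.1 hac]⟩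
  obtain ⟨W, hWG, hcard, hcov⟩ := exists_finset_centered_cover hGF
  exact ⟨W, hWG, lt_of_le_of_lt (by exact_mod_cast hcard) hFX,
    by rwa [show 6 * r = 2 * (3 * r) by ring]⟩

end Covering

section FractalDimension

variable {V : Type*} [MetricSpace V]

lemma IsCompact.coverN_ne_top {G : Set V} (hG : IsCompact G) {ε : ℝ} (hε : 0 < ε) :
    coverN G ε ≠ ⊤ := by
  obtain ⟨F, hFG, hGF⟩ := hG.elim_nhds_subcover (fun x => ball x ε) fun x _ => ball_mem_nhds x hε
  exact ne_top_of_le_ne_top (ENNReal.natCast_ne_top _) (coverN_le_card hFG hGF)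

lemma exists_coverN_lt_rpow_of_fracDim_ne_top {M : Set V} (hM : IsCompact M)
    (hdim : fracDim M ≠ ⊤) :
    ∃ d : ℝ, 0 ≤ d ∧ ∃ ε₀ > 0, ∀ ε ∈ Ioo 0 ε₀, coverN M ε < ENNReal.ofReal (ε⁻¹ ^ d) := by
  set d := (fracDim M).toReal + 1
  have hlt : fracDim M < ENNReal.ofReal d :=
    (ENNReal.lt_ofReal_iff_toReal_lt hdim).2 (lt_add_one _)
  obtain ⟨u, hu, hsub⟩ := mem_nhdsGT_iff_exists_Ioo_subset.1 (eventually_lt_of_limsup_lt hlt)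
  refine ⟨d, by positivity, min u 1, lt_min hu one_pos, fun ε ⟨hε, hεu⟩ => ?_⟩
  have hN := hM.coverN_ne_top hε
  have hL : 0 < Real.log ε⁻¹ :=
    Real.log_pos (one_lt_inv_iff₀.2 ⟨hε, hεu.trans_le (min_le_right _ _)⟩)
  have hq : (if coverN M ε = ⊤ then ⊤ else ENNReal.ofReal
      (Real.log (coverN M ε).toReal / Real.log (1 / ε))) < ENNReal.ofReal d :=
    hsub ⟨hε, hεu.trans_le (min_le_left _ _)⟩
  rw [if_neg hN, ENNReal.ofReal_lt_ofReal_iff', one_div, div_lt_iff₀ hL] at hq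
  have hlog : Real.log (coverN M ε).toReal < Real.log ε⁻¹ * d := by linarith [hq.1]
  rw [← ENNReal.ofReal_toReal hN, ENNReal.ofReal_lt_ofReal_iff (by positivity),
    Real.rpow_def_of_pos (inv_pos.2 hε)]
  rcases ENNReal.toReal_nonneg.eq_or_lt with h0 | hpos
  · rw [← h0]; positivity
  · exact (Real.log_lt_iff_lt_exp hpos).1 hlog

lemma fracDim_ne_top_of_coverN_le_rpow {M : Set V} {C d ε₀ : ℝ} (hC : 0 < C) (hd : 0 ≤ d)
    (hε₀ : 0 < ε₀) (hcov : ∀ ε ∈ Ioo 0 ε₀, coverN M ε ≤ ENNReal.ofReal (C * ε⁻¹ ^ d)) :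
    fracDim M ≠ ⊤ := by
  refine ne_top_of_le_ne_top (ENNReal.ofReal_ne_top (r := |Real.log C| + d))
    (limsup_le_of_le (by isBoundedDefault) ?_)
  have hpos : 0 < min ε₀ (Real.exp (-1)) := lt_min hε₀ (Real.exp_pos _)
  filter_upwards [Ioo_mem_nhdsGT hpos] with ε ⟨hε, hεlt⟩
  have hN := hcov ε ⟨hε, hεlt.trans_le (min_le_left _ _)⟩
  have hL : 1 ≤ Real.log ε⁻¹ := by
    rw [Real.log_inv, le_neg]
    exact ((Real.log_lt_iff_lt_exp hε).2 (hεlt.trans_le (min_le_right _ _))).le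
  have hlogN : Real.log (coverN M ε).toReal ≤ |Real.log C| + d * Real.log ε⁻¹ := by
    rcases ENNReal.toReal_nonneg.eq_or_lt with h0 | hN0
    · rw [← h0, Real.log_zero]; positivity
    · calc Real.log (coverN M ε).toReal ≤ Real.log (C * ε⁻¹ ^ d) :=
            Real.log_le_log hN0 (ENNReal.toReal_le_of_le_ofReal (by positivity) hN)
        _ = Real.log C + d * Real.log ε⁻¹ := by
            rw [Real.log_mul hC.ne' (by positivity), Real.log_rpow (by positivity)]
        _ ≤ _ := by gcongr; exact le_abs_self _
  rw [if_neg (ne_top_of_le_ne_top ENNReal.ofReal_ne_top hN), one_div]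
  refine ENNReal.ofReal_le_ofReal ((div_le_iff₀ (by linarith)).2 ?_)
  nlinarith [abs_nonneg (Real.log C)]

lemma fracDim_ne_top_of_coverN_le_geometric {M : Set V} {a q b h : ℝ} (ha : 0 < a)
    (hq0 : 0 < q) (hq1 : q < 1) (hb : 0 < b) (hh : 1 ≤ h)
    (hcov : ∀ k : ℕ, coverN M (a * q ^ k) ≤ ENNReal.ofReal (b * h ^ k)) : fracDim M ≠ ⊤ := by
  have hlogq : 0 < Real.log q⁻¹ := Real.log_pos (one_lt_inv_iff₀.2 ⟨hq0, hq1⟩)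
  set d := Real.log h / Real.log q⁻¹
  refine fracDim_ne_top_of_coverN_le_rpow (C := b * h * a ^ d) (by positivity)
    (div_nonneg (Real.log_nonneg hh) hlogq.le) ha fun ε ⟨hε, hεa⟩ => ?_
  -- `k` is the first index with `a * q ^ k ≤ ε`, so `h ^ k` is at most `h * (a / ε) ^ d`.
  set u := Real.log (a / ε) / Real.log q⁻¹
  have hu : 0 ≤ u := div_nonneg (Real.log_nonneg ((one_le_div hε).2 hεa.le)) hlogq.le
  set k := ⌈u⌉₊
  have hqk : a * q ^ k ≤ ε := by
    have hqu : q ^ u = ε / a := by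
      rw [Real.rpow_def_of_pos hq0, ← Real.exp_log (div_pos hε ha)]
      congr 1
      simp only [u, Real.log_inv, Real.log_div hε.ne' ha.ne', Real.log_div ha.ne' hε.ne']
      have hlq : Real.log q ≠ 0 := (Real.log_neg hq0 hq1).ne
      field_simp
      ring
    have : q ^ (k : ℝ) ≤ q ^ u := Real.rpow_le_rpow_of_exponent_ge hq0 hq1.le (Nat.le_ceil u)
    rw [Real.rpow_natCast, hqu] at this
    calc a * q ^ k ≤ a * (ε / a) := by gcongr
      _ = ε := by field_simp
  have hhk : h ^ k ≤ h * a ^ d * ε⁻¹ ^ d := by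
    have hhu : h ^ u = a ^ d * ε⁻¹ ^ d := by
      rw [← Real.mul_rpow ha.le (by positivity), ← div_eq_mul_inv,
        Real.rpow_def_of_pos (by positivity), Real.rpow_def_of_pos (div_pos ha hε)]
      simp only [u, d]
      ring_nf
    have : h ^ (k : ℝ) ≤ h ^ (u + 1) :=
      Real.rpow_le_rpow_of_exponent_le hh (Nat.ceil_lt_add_one hu).le
    rw [Real.rpow_natCast, Real.rpow_add_one (by positivity), hhu] at this
    linarith
  calc coverN M ε ≤ coverN M (a * q ^ k) := coverN_anti hqk
    _ ≤ ENNReal.ofReal (b * h ^ k) := hcov k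
    _ ≤ ENNReal.ofReal (b * h * a ^ d * ε⁻¹ ^ d) := by
        refine ENNReal.ofReal_le_ofReal ?_
        calc b * h ^ k ≤ b * (h * a ^ d * ε⁻¹ ^ d) := by gcongr
          _ = _ := by ring

end FractalDimension

section OrbitClosure

variable {V : Type*} [MetricSpace V]

lemma isCompact_closure_iUnion_of_infEDist_le {K : Set V} (hK : IsCompact K) {P : ℕ → Finset V}
    {ρ : ℕ → ℝ} (hρ : Tendsto ρ atTop (𝓝 0))
    (hPK : ∀ j, ∀ x ∈ P j, infEDist x K ≤ ENNReal.ofReal (ρ j)) :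
    IsCompact (closure (⋃ j, (P j : Set V))) := by
  classical
  set U := ⋃ j, (P j : Set V)
  suffices hUK : IsCompact (U ∪ K) from
    hUK.of_isClosed_subset isClosed_closure (closure_minimal subset_union_left hUK.isClosed)
  refine isCompact_of_finite_subcover fun O hO hcov => ?_
  obtain ⟨t₁, ht₁⟩ := hK.elim_finite_subcover O hO (subset_union_right.trans hcov)
  obtain ⟨δ, hδ, hthick⟩ :=
    hK.exists_thickening_subset_open (isOpen_biUnion fun i _ => hO i) ht₁
  obtain ⟨J, hJ⟩ := eventually_atTop.1 (hρ.eventually_lt_const hδ)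
  obtain ⟨t₂, ht₂⟩ := ((Finset.range J).biUnion P).finite_toSet.isCompact.elim_finite_subcover
    O hO fun x hx => by
      obtain ⟨j, -, hj⟩ := Finset.mem_biUnion.1 (Finset.mem_coe.1 hx)
      exact hcov (Or.inl (mem_iUnion.2 ⟨j, hj⟩))
  refine ⟨t₁ ∪ t₂, ?_⟩
  rw [Finset.set_biUnion_union]
  rintro x (hx | hx)
  · obtain ⟨j, hj⟩ := mem_iUnion.1 hx
    by_cases hjJ : j < J
    · exact Or.inr (ht₂ (by simpa using ⟨j, hjJ, hj⟩))
    · refine Or.inl (hthick (mem_thickening_iff_infEDist_lt.2 ((hPK j x hj).trans_lt ?_)))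
      exact (ENNReal.ofReal_lt_ofReal_iff hδ).2 (hJ j (not_lt.1 hjJ))
  · exact Or.inl (ht₁ hx)

lemma coverN_closure_iUnion_le {K : Set V} {P : ℕ → Finset V} {F : Finset V} {r : ℝ} (hr : 0 < r)
    (J : ℕ) (hKF : K ⊆ ⋃ c ∈ F, ball c r)
    (hPK : ∀ j, J < j → ∀ x ∈ P j, infEDist x K ≤ ENNReal.ofReal r) :
    coverN (closure (⋃ j, (P j : Set V))) (12 * r) ≤
      ((∑ j ∈ Finset.range (J + 1), (P j).card + F.card : ℕ) : ℝ≥0∞) := by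
  classical
  set C := (Finset.range (J + 1)).biUnion P ∪ F
  have hcov : ⋃ j, (P j : Set V) ⊆ ⋃ c ∈ C, ball c (3 * r) := fun x hx => by
    obtain ⟨j, hj⟩ := mem_iUnion.1 hx
    by_cases hjJ : j ≤ J
    · exact mem_iUnion₂.2 ⟨x, Finset.mem_union_left _ (Finset.mem_biUnion.2
        ⟨j, Finset.mem_range.2 (Nat.lt_succ_of_le hjJ), hj⟩), mem_ball_self (by positivity)⟩
    · obtain ⟨a, ha, hxa⟩ :=
        exists_dist_lt_two_mul_of_infEDist_le hr (hPK j (not_le.1 hjJ) x hj)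
      obtain ⟨c, hc, hac⟩ := mem_iUnion₂.1 (hKF ha)
      exact mem_iUnion₂.2 ⟨c, Finset.mem_union_right _ hc,
        mem_ball.2 <| by linarith [dist_triangle x a c, mem_ball.1 hac]⟩
  calc coverN (closure (⋃ j, (P j : Set V))) (12 * r) ≤ C.card := by
        simpa only [show 12 * r = 4 * (3 * r) by ring] using
          coverN_closure_le_card (by positivity) hcov
    _ ≤ _ := by
        gcongr
        exact (Finset.card_union_le _ _).trans (Nat.add_le_add_right Finset.card_biUnion_le _)

lemma exists_seq_tendsto_of_mem_closure_iUnion {P : ℕ → Finset V} {x : V}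
    (hx : x ∈ closure (⋃ j, (P j : Set V))) (hxP : x ∉ ⋃ j, (P j : Set V)) :
    ∃ j : ℕ → ℕ, ∃ y : ℕ → V,
      Tendsto j atTop atTop ∧ (∀ m, y m ∈ P (j m)) ∧ Tendsto y atTop (𝓝 x) := by
  classical
  have htail : ∀ m, x ∈ closure (⋃ (j) (_ : m ≤ j), (P j : Set V)) := fun m => by
    have hsplit : ⋃ j, (P j : Set V) ⊆
        ((Finset.range m).biUnion P : Set V) ∪ ⋃ (j) (_ : m ≤ j), (P j : Set V) := fun y hy => by
      obtain ⟨j, hj⟩ := mem_iUnion.1 hy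
      by_cases hjm : j < m
      · exact Or.inl (by simpa using ⟨j, hjm, hj⟩)
      · exact Or.inr (mem_iUnion₂.2 ⟨j, not_lt.1 hjm, hj⟩)
    have := closure_mono hsplit hx
    rw [closure_union, (Finset.finite_toSet _).isClosed.closure_eq] at this
    refine this.resolve_left fun h => hxP ?_
    obtain ⟨j, -, hj⟩ := Finset.mem_biUnion.1 (Finset.mem_coe.1 h)
    exact mem_iUnion.2 ⟨j, hj⟩
  have hseq : ∀ m : ℕ, ∃ j, m ≤ j ∧ ∃ y ∈ P j, dist x y < 1 / (m + 1) := fun m => by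
    obtain ⟨y, hy, hxy⟩ := Metric.mem_closure_iff.1 (htail m) _ Nat.one_div_pos_of_nat
    obtain ⟨j, hj, hyj⟩ := mem_iUnion₂.1 hy
    exact ⟨j, hj, y, hyj, hxy⟩
  choose j hj y hy hxy using hseq
  refine ⟨j, y, tendsto_atTop_mono hj tendsto_id, hy, tendsto_iff_dist_tendsto_zero.2 ?_⟩
  exact squeeze_zero (fun _ => dist_nonneg) (fun m => by rw [dist_comm]; exact (hxy m).le)
    tendsto_one_div_add_atTop_nhds_zero_nat

end OrbitClosure

section Semiflow

variable {V : Type*} {S : ℝ → V → V}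

lemma IsSemiflow.image_image (hS : IsSemiflow S) {t s : ℝ} (ht : 0 ≤ t) (hs : 0 ≤ s) (G : Set V) :
    S t '' (S s '' G) = S (t + s) '' G := by
  rw [Set.image_image]
  exact image_congr fun x _ => hS.2 t s ht hs x

-- `orbitNets S τ W j` consists of the points of `W i`, `i ≤ j`, carried forward `j - i` steps
-- by `S τ`.
open Classical in
noncomputable def orbitNets (S : ℝ → V → V) (τ : ℝ) (W : ℕ → Finset V) : ℕ → Finset V
  | 0 => W 0
  | j + 1 => (orbitNets S τ W j).image (S τ) ∪ W (j + 1)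

lemma subset_orbitNets (τ : ℝ) (W : ℕ → Finset V) : ∀ j, W j ⊆ orbitNets S τ W j
  | 0 => subset_rfl
  | _ + 1 => by classical exact Finset.subset_union_right

lemma map_mem_orbitNets_succ {τ : ℝ} {W : ℕ → Finset V} {j : ℕ} {x : V}
    (hx : x ∈ orbitNets S τ W j) : S τ x ∈ orbitNets S τ W (j + 1) := by
  classical exact Finset.mem_union_left _ (Finset.mem_image_of_mem _ hx)

lemma orbitNets_subset_image (hS : IsSemiflow S) {τ t₀ : ℝ} (hτ : 0 ≤ τ) (ht₀ : 0 ≤ t₀)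
    {B : Set V} {W : ℕ → Finset V} (hW : ∀ j, ↑(W j) ⊆ S (t₀ + j * τ) '' B) :
    ∀ j, ↑(orbitNets S τ W j) ⊆ S (t₀ + j * τ) '' B
  | 0 => hW 0
  | j + 1 => by
    classical
    have ih := orbitNets_subset_image hS hτ ht₀ hW j
    rintro x hx
    rcases Finset.mem_union.1 hx with hx | hx
    · obtain ⟨y, hy, rfl⟩ := Finset.mem_image.1 hx
      have := image_mono (f := S τ) ih ⟨y, hy, rfl⟩
      rwa [hS.image_image hτ (by positivity), show τ + (t₀ + j * τ) = t₀ + ↑(j + 1) * τ by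
        push_cast; ring] at this
    · exact hW (j + 1) hx

lemma card_orbitNets_le {τ : ℝ} {W : ℕ → Finset V} {n : ℕ → ℝ} (hn : Monotone n)
    (hW : ∀ j, ((W j).card : ℝ) ≤ n j) : ∀ j, ((orbitNets S τ W j).card : ℝ) ≤ (j + 1) * n j
  | 0 => by simpa [orbitNets] using hW 0
  | j + 1 => by
    classical
    have ih := card_orbitNets_le (τ := τ) hn hW j
    have hcard : ((orbitNets S τ W (j + 1)).card : ℝ) ≤
        (orbitNets S τ W j).card + (W (j + 1)).card := by
      exact_mod_cast (Finset.card_union_le _ _).trans (Nat.add_le_add_right Finset.card_image_le _)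
    have hmono : (j + 1 : ℝ) * n j ≤ (j + 1) * n (j + 1) := by gcongr; exact hn j.le_succ
    push_cast
    linarith [hW (j + 1)]

end Semiflow

section Attraction

variable {V : Type*} [MetricSpace V] {S : ℝ → V → V}

lemma ExpAttractsAt.attractsSet {M : Set V} {ξ : ℝ} (h : ExpAttractsAt S M ξ) (hξ : 0 ≤ ξ) :
    AttractsSet S M := fun G hG => by
  refine tendsto_of_tendsto_of_tendsto_of_le_of_le' tendsto_const_nhds (h G hG)
    (Eventually.of_forall fun _ => zero_le) ?_
  filter_upwards [eventually_ge_atTop 0] with t ht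
  exact le_mul_of_one_le_left' (ENNReal.one_le_ofReal.2 (Real.one_le_exp (mul_nonneg hξ ht)))

lemma ExpAttractsAt.eventually_attrDist_le {M : Set V} {ξ : ℝ} (h : ExpAttractsAt S M ξ)
    {G : Set V} (hG : IsBounded G) :
    ∀ᶠ t in atTop, attrDist (S t '' G) M ≤ ENNReal.ofReal (Real.exp (-(ξ * t))) := by
  filter_upwards [(h G hG).eventually_lt_const one_pos] with t ht
  rw [Real.exp_neg, ENNReal.ofReal_inv_of_pos (Real.exp_pos _)]
  exact ENNReal.le_inv_iff_mul_le.2 (by rw [mul_comm]; exact ht.le)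

lemma ExpAttractsAt.exists_attrDist_grid_le {M : Set V} {ξ : ℝ} (h : ExpAttractsAt S M ξ)
    (hξ : 0 < ξ) {G : Set V} (hG : IsBounded G) {τ : ℝ} (hτ : 0 ≤ τ) {ε₀ : ℝ} (hε₀ : 0 < ε₀) :
    ∃ t₀ ≥ 0, Real.exp (-(ξ * t₀)) < ε₀ ∧ ∀ j : ℕ,
      attrDist (S (t₀ + j * τ) '' G) M ≤ ENNReal.ofReal (Real.exp (-(ξ * (t₀ + j * τ)))) := by
  have hexp : Tendsto (fun t => Real.exp (-(ξ * t))) atTop (𝓝 0) :=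
    Real.tendsto_exp_neg_atTop_nhds_zero.comp (tendsto_id.const_mul_atTop hξ)
  obtain ⟨t₀, ht₀⟩ := eventually_atTop.1 ((h.eventually_attrDist_le hG).and
    ((eventually_ge_atTop 0).and (hexp.eventually_lt_const hε₀)))
  exact ⟨t₀, (ht₀ t₀ le_rfl).2.1, (ht₀ t₀ le_rfl).2.2,
    fun j => (ht₀ _ (le_add_of_nonneg_right (by positivity))).1⟩

lemma AttractsSet.isAbsorbingSet_cthickening {A : Set V} (h : AttractsSet S A) {δ : ℝ}
    (hδ : 0 < δ) : IsAbsorbingSet S (cthickening δ A) := fun G hG => by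
  obtain ⟨t₁, ht₁⟩ :=
    eventually_atTop.1 ((h G hG).eventually_lt_const (ENNReal.ofReal_pos.2 hδ))
  refine ⟨max t₁ 0, le_max_right _ _, fun t ht x hx => ?_⟩
  exact mem_cthickening_iff.2 ((le_attrDist hx).trans (ht₁ t (le_of_max_le_left ht)).le)

-- The grid only yields `attrDist (S t G) M ≤ C' * exp (-ξ t)`; the smaller rate `ξ'` turns this
-- bound into convergence to `0`.
lemma IsAbsorbingSet.expAttractsAt_of_decay (hS : IsSemiflow S) {B M : Set V}
    (hB : IsAbsorbingSet S B) {τ t₀ C ξ ξ' : ℝ} (hτ : 0 < τ) (ht₀ : 0 ≤ t₀) (hC : 0 ≤ C)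
    (hξ : 0 ≤ ξ) (hξ' : ξ' < ξ)
    (hdecay : ∀ k : ℕ, attrDist (S (t₀ + k * τ) '' B) M ≤
      ENNReal.ofReal (C * Real.exp (-(ξ * (t₀ + k * τ))))) :
    ExpAttractsAt S M ξ' := fun G hG => by
  obtain ⟨tG, htG0, htG⟩ := hB G hG
  set C' := C * Real.exp (ξ * (tG + τ))
  have hbound : ∀ t ≥ tG + t₀, ENNReal.ofReal (Real.exp (ξ' * t)) * attrDist (S t '' G) M ≤
      ENNReal.ofReal (C' * Real.exp (-((ξ - ξ') * t))) := fun t ht => by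
    set k := ⌊(t - tG - t₀) / τ⌋₊
    have hk := Nat.floor_le (div_nonneg (by linarith : 0 ≤ t - tG - t₀) hτ.le)
    have hk' := Nat.lt_floor_add_one ((t - tG - t₀) / τ)
    rw [le_div_iff₀ hτ] at hk
    rw [div_lt_iff₀ hτ] at hk'
    set σ := t₀ + k * τ
    have hsub : S t '' G ⊆ S σ '' B := by
      calc S t '' G = S σ '' (S (t - σ) '' G) := by
            rw [hS.image_image (by positivity) (by linarith)]; ring_nf
        _ ⊆ S σ '' B := image_mono (htG _ (by linarith))
    calc ENNReal.ofReal (Real.exp (ξ' * t)) * attrDist (S t '' G) M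
        ≤ ENNReal.ofReal (Real.exp (ξ' * t)) * ENNReal.ofReal (C * Real.exp (-(ξ * σ))) := by
          gcongr; exact (attrDist_mono_left hsub).trans (hdecay k)
      _ = ENNReal.ofReal (C * Real.exp (ξ' * t - ξ * σ)) := by
          rw [← ENNReal.ofReal_mul (Real.exp_pos _).le, sub_eq_add_neg, Real.exp_add]; ring_nf
      _ ≤ ENNReal.ofReal (C' * Real.exp (-((ξ - ξ') * t))) := by
          rw [mul_assoc, ← Real.exp_add]
          gcongr
          nlinarith
  have hlim : Tendsto (fun t => ENNReal.ofReal (C' * Real.exp (-((ξ - ξ') * t)))) atTop (𝓝 0) := by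
    rw [← ENNReal.ofReal_zero, ← mul_zero C']
    exact ENNReal.tendsto_ofReal ((Real.tendsto_exp_neg_atTop_nhds_zero.comp
      (tendsto_id.const_mul_atTop (sub_pos.2 hξ'))).const_mul C')
  exact tendsto_of_tendsto_of_tendsto_of_le_of_le' tendsto_const_nhds hlim
    (Eventually.of_forall fun _ => zero_le) ((eventually_ge_atTop _).mono hbound)

lemma AsympClosed.image_closure_iUnion_subset (hS : IsSemiflow S) (hac : AsympClosed S)
    {τ : ℝ} (hτ : 0 ≤ τ) {B : Set V} (hB : IsBounded B) {P : ℕ → Finset V} {s : ℕ → ℝ}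
    (hs0 : ∀ j, 0 ≤ s j) (hs : Tendsto s atTop atTop) (hPB : ∀ j, ↑(P j) ⊆ S (s j) '' B)
    (hPS : S τ '' ⋃ j, (P j : Set V) ⊆ ⋃ j, (P j : Set V))
    (hcpt : IsCompact (closure (⋃ j, (P j : Set V)))) :
    S τ '' closure (⋃ j, (P j : Set V)) ⊆ closure (⋃ j, (P j : Set V)) := by
  rintro _ ⟨x, hx, rfl⟩
  by_cases hxP : x ∈ ⋃ j, (P j : Set V)
  · exact subset_closure (hPS ⟨x, hxP, rfl⟩)
  obtain ⟨j, y, hj, hy, hyx⟩ := exists_seq_tendsto_of_mem_closure_iUnion hx hxP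
  choose a ha hay using fun m => hPB (j m) (hy m)
  obtain ⟨z, hz, φ, hφ, hφz⟩ := hcpt.tendsto_subseq fun m =>
    subset_closure (hPS ⟨y m, mem_iUnion.2 ⟨j m, hy m⟩, rfl⟩)
  have hSy : ∀ m, S (τ + s (j m)) (a m) = S τ (y m) := fun m => by
    rw [← hay, hS.2 τ _ hτ (hs0 _)]
  convert hz
  refine hac τ hτ (s ∘ j ∘ φ) (fun _ => hs0 _) (hs.comp (hj.comp hφ.tendsto_atTop)) (a ∘ φ)
    (hB.subset (range_subset_iff.2 fun _ => ha _)) x z ?_ ?_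
  · simpa only [Function.comp_def, hay] using hyx.comp hφ.tendsto_atTop
  · simpa only [Function.comp_def, hSy] using hφz

end Attraction

section Construction

variable {V : Type*} [MetricSpace V]

lemma fracDim_closure_iUnion_ne_top {K : Set V} {P : ℕ → Finset V} {r₀ q d : ℝ} (hr₀ : 0 < r₀)
    (hq0 : 0 < q) (hq1 : q < 1) (hd : 0 ≤ d)
    (hK : ∀ j : ℕ, coverN K (r₀ * q ^ j) < ENNReal.ofReal ((r₀ * q ^ j)⁻¹ ^ d))
    (hPcard : ∀ j : ℕ, ((P j).card : ℝ) ≤ (j + 1) * (r₀ * q ^ j)⁻¹ ^ d)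
    (hPK : ∀ j : ℕ, ∀ x ∈ P j, infEDist x K ≤ ENNReal.ofReal (r₀ * q ^ j)) :
    fracDim (closure (⋃ j, (P j : Set V))) ≠ ⊤ := by
  set n₀ := r₀⁻¹ ^ d
  set g := q⁻¹ ^ d
  have hn : ∀ j : ℕ, (r₀ * q ^ j)⁻¹ ^ d = n₀ * g ^ j := fun j => by
    rw [mul_inv, ← inv_pow, Real.mul_rpow (by positivity) (by positivity),
      Real.rpow_pow_comm (by positivity)]
  have hg : 1 ≤ g := Real.one_le_rpow (one_le_inv₀ hq0 |>.2 hq1.le) hd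
  refine fracDim_ne_top_of_coverN_le_geometric (a := 12 * r₀) (b := 2 * n₀) (h := 4 * g)
    (by positivity) hq0 hq1 (by positivity) (by linarith) fun k => ?_
  obtain ⟨F, -, hKF, hF⟩ := exists_finset_of_coverN_lt (hK k)
  have hPK' : ∀ j, k < j → ∀ x ∈ P j, infEDist x K ≤ ENNReal.ofReal (r₀ * q ^ k) :=
    fun j hj x hx => (hPK j x hx).trans <| ENNReal.ofReal_le_ofReal <| by
      exact mul_le_mul_of_nonneg_left (pow_le_pow_of_le_one hq0.le hq1.le hj.le) hr₀.le
  have hsum : ∑ j ∈ Finset.range (k + 1), ((P j).card : ℝ) ≤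
      (k + 1) * ((k + 1) * (n₀ * g ^ k)) := by
    calc ∑ j ∈ Finset.range (k + 1), ((P j).card : ℝ)
        ≤ ∑ _j ∈ Finset.range (k + 1), (k + 1) * (n₀ * g ^ k) :=
          Finset.sum_le_sum fun j hj => (hPcard j).trans <| by
            have hjk : j ≤ k := Nat.lt_succ_iff.1 (Finset.mem_range.1 hj)
            rw [hn]
            gcongr
      _ = _ := by simp
  have hk2 : ((k : ℝ) + 1) ^ 2 + 1 ≤ 2 * 4 ^ k := by
    have h2k : (k : ℝ) + 1 ≤ 2 ^ k := by exact_mod_cast k.lt_two_pow_self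
    have h4k : (1 : ℝ) ≤ 4 ^ k := one_le_pow₀ (by norm_num)
    calc ((k : ℝ) + 1) ^ 2 + 1 ≤ (2 ^ k) ^ 2 + 4 ^ k := by gcongr
      _ = 2 * 4 ^ k := by rw [← pow_mul, mul_comm, pow_mul]; norm_num; ring
  rw [mul_assoc]
  refine (coverN_closure_iUnion_le (by positivity) k hKF hPK').trans ?_
  rw [← ENNReal.ofReal_natCast]
  refine ENNReal.ofReal_le_ofReal ?_
  push_cast
  rw [hn] at hF
  calc ∑ j ∈ Finset.range (k + 1), ((P j).card : ℝ) + F.card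
      ≤ (((k : ℝ) + 1) ^ 2 + 1) * (n₀ * g ^ k) := by nlinarith
    _ ≤ 2 * 4 ^ k * (n₀ * g ^ k) := by gcongr
    _ = 2 * n₀ * (4 * g) ^ k := by ring

end Construction

section Construction

variable {V : Type*} [MetricSpace V] {S : ℝ → V → V}

theorem exists_isDiscExpAttr_of_expAttractsAt (hS : IsSemiflow S) (hac : AsympClosed S)
    {M₀ : Set V} (hne : M₀.Nonempty) (hcpt : IsCompact M₀) (hdim : fracDim M₀ ≠ ⊤) {ξ : ℝ}
    (hξ : 0 < ξ) (hattr : ExpAttractsAt S M₀ ξ) {τ : ℝ} (hτ : 0 < τ) :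
    ∃ M : Set V, IsDiscExpAttr S τ M := by
  set B := cthickening 1 M₀
  have hB : IsBounded B := hcpt.isBounded.cthickening
  obtain ⟨d, hd, ε₀, hε₀, hM₀⟩ := exists_coverN_lt_rpow_of_fracDim_ne_top hcpt hdim
  obtain ⟨t₀, ht₀0, hr₀ε, hgrid⟩ := hattr.exists_attrDist_grid_le hξ hB hτ.le hε₀
  set r₀ := Real.exp (-(ξ * t₀))
  set q := Real.exp (-(ξ * τ))
  have hq1 : q < 1 := Real.exp_lt_one_iff.2 (by nlinarith)
  have hr : ∀ j : ℕ, r₀ * q ^ j = Real.exp (-(ξ * (t₀ + j * τ))) := fun j => by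
    rw [← Real.exp_nat_mul, ← Real.exp_add]; ring_nf
  have hBM₀ : ∀ j : ℕ, attrDist (S (t₀ + j * τ) '' B) M₀ ≤ ENNReal.ofReal (r₀ * q ^ j) :=
    fun j => hr j ▸ hgrid j
  have hcovM₀ : ∀ j : ℕ, coverN M₀ (r₀ * q ^ j) < ENNReal.ofReal ((r₀ * q ^ j)⁻¹ ^ d) :=
    fun j => hM₀ _ ⟨by positivity, (mul_le_of_le_one_right (Real.exp_pos _).le
      (pow_le_one₀ (Real.exp_pos _).le hq1.le)).trans_lt hr₀ε⟩
  choose W hWB hWcard hWcov using fun j : ℕ =>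
    exists_net_of_attrDist_le (by positivity) (hBM₀ j) (hcovM₀ j)
  set E := orbitNets S τ W
  set M := closure (⋃ j, (E j : Set V))
  have hEB := orbitNets_subset_image hS hτ.le ht₀0 hWB
  have hEM₀ : ∀ j : ℕ, ∀ x ∈ E j, infEDist x M₀ ≤ ENNReal.ofReal (r₀ * q ^ j) :=
    fun j x hx => (le_attrDist (hEB j hx)).trans (hBM₀ j)
  have hMcpt : IsCompact M := isCompact_closure_iUnion_of_infEDist_le hcpt
    (by simpa using (tendsto_pow_atTop_nhds_zero_of_lt_one (Real.exp_pos _).le hq1).const_mul r₀)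
    hEM₀
  have hWM : ∀ j, ↑(W j) ⊆ M := fun j =>
    (Finset.coe_subset.2 (subset_orbitNets (S := S) τ W j)).trans
      ((subset_iUnion (fun i => (E i : Set V)) j).trans subset_closure)
  refine ⟨M, ?_, hMcpt, ?_, ?_, ξ / 2, half_pos hξ, ?_⟩
  · obtain ⟨x, hx⟩ := (hne.mono (self_subset_cthickening _)).image (S (t₀ + (0 : ℕ) * τ))
    obtain ⟨w, hw, -⟩ := mem_iUnion₂.1 (hWcov 0 hx)
    exact ⟨w, hWM 0 hw⟩
  · refine hac.image_closure_iUnion_subset hS hτ.le hB (fun j => by positivity)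
      (tendsto_atTop_add_const_left _ _ (tendsto_natCast_atTop_atTop.atTop_mul_const hτ)) hEB ?_
      hMcpt
    rintro _ ⟨x, hx, rfl⟩
    obtain ⟨j, hj⟩ := mem_iUnion.1 hx
    exact mem_iUnion.2 ⟨j + 1, map_mem_orbitNets_succ hj⟩
  · refine fracDim_closure_iUnion_ne_top (Real.exp_pos _) (Real.exp_pos _) hq1 hd hcovM₀
      (card_orbitNets_le (fun i j hij => ?_) fun j => (hWcard j).le) hEM₀
    have : r₀ * q ^ j ≤ r₀ * q ^ i :=
      mul_le_mul_of_nonneg_left (pow_le_pow_of_le_one (Real.exp_pos _).le hq1.le hij)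
        (Real.exp_pos _).le
    exact Real.rpow_le_rpow (by positivity) (inv_anti₀ (by positivity) this) hd
  · exact ((hattr.attractsSet hξ.le).isAbsorbingSet_cthickening one_pos).expAttractsAt_of_decay
      hS hτ ht₀0 (C := 6) (by norm_num) hξ.le (half_lt_self hξ) fun k =>
        hr k ▸ attrDist_le_of_subset_biUnion_ball (hWM k) (hWcov k)

end Construction

section Statement4

variable {V : Type*} [MetricSpace V]

theorem Tdiscrete_exponential_attractor_small_time_step_general
    (S : ℝ → V → V) (hS : IsSemiflow S) (hac : AsympClosed S)
    (T : ℝ) (hT : 0 < T) (N : ℕ) (hN : 0 < N) :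
    (∃ M₀ : Set V, IsDiscExpAttr S T M₀) ↔
    (∃ M₀ : Set V, IsDiscExpAttr S (T / N) M₀) := by
  constructor
  · rintro ⟨M₀, hne, hcpt, -, hdim, ξ, hξ, hattr⟩
    exact exists_isDiscExpAttr_of_expAttractsAt hS hac hne hcpt hdim hξ hattr
      (div_pos hT (Nat.cast_pos.2 hN))
  · rintro ⟨M₀, hne, hcpt, -, hdim, ξ, hξ, hattr⟩
    exact exists_isDiscExpAttr_of_expAttractsAt hS hac hne hcpt hdim hξ hattr hT

theorem Tdiscrete_exponential_attractor_small_time_step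
    [CompleteSpace V] (S : ℝ → V → V) (hS : IsSemiflow S) (hac : AsympClosed S)
    (T : ℝ) (hT : 0 < T) (N : ℕ) (hN : 0 < N) :
    (∃ M₀ : Set V, IsDiscExpAttr S T M₀) ↔
    (∃ M₀ : Set V, IsDiscExpAttr S (T / N) M₀) :=
  Tdiscrete_exponential_attractor_small_time_step_general S hS hac T hT N hN

end Statement4
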